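/- Path repair around spaced Byzantine vertices: let G be the N×N torus (N ≥ 7), B a set of Byzantine vertices pairwise at distance at least 5, and (u₀,...,u_n) any path in G with u₀ and u_n correct. Then there exists a path from u₀ to u_n consisting only of correct vertices, obtained by replacing each Byzantine u_i by a detour along the 8-cycle of vertices surrounding u_i, which is entirely correct since any other Byzantine vertex is at distance at least 5 > 2 from u_i. -/

import Mathlib

/-- The `N × N` torus network. -/
def torus (N : ℕ) : SimpleGraph (ZMod N × ZMod N) :=
  SimpleGraph.fromRel (fun a b =>
    (a.1 = b.1 ∧ a.2 = b.2 + 1) ∨ (a.2 = b.2 ∧ a.1 = b.1 + 1))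

/-!
A Byzantine vertex `c` met by the walk is skipped by joining its two neighbours on the walk
(correct, since `B` is independent) around the eight vertices surrounding `c`. On the torus,
two neighbours `c + e`, `c + f` of `c` are joined through the corners `c + e + f`, and every
vertex used lies within distance 2 of `c`, hence is correct because `B` is 5-spaced.
-/

namespace SimpleGraph

variable {V : Type*} {G : SimpleGraph V}

theorem Reachable.exists_walk_of_induce {s : Set V} {a b : V} {ha : a ∈ s} {hb : b ∈ s}
    (h : (G.induce s).Reachable ⟨a, ha⟩ ⟨b, hb⟩) : ∃ w : G.Walk a b, ∀ x ∈ w.support, x ∈ s := by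
  obtain ⟨p⟩ := h
  refine ⟨p.map (Embedding.induce s).toHom, fun x hx => ?_⟩
  obtain ⟨y, -, rfl⟩ := List.mem_map.1 (by rw [← Walk.support_map]; exact hx)
  exact y.2

theorem reachable_induce_compl_of_walk {B : Set V} (hindep : ∀ c ∈ B, ∀ d, G.Adj c d → d ∉ B)
    (hdetour : ∀ c ∈ B, ∀ x y (hx : x ∉ B) (hy : y ∉ B), G.Adj c x → G.Adj c y →
      (G.induce Bᶜ).Reachable ⟨x, hx⟩ ⟨y, hy⟩) :
    ∀ {a b : V}, G.Walk a b → ∀ (ha : a ∉ B) (hb : b ∉ B),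
      (G.induce Bᶜ).Reachable ⟨a, ha⟩ ⟨b, hb⟩
  | _, _, .nil, _, _ => .rfl
  | _, _, .cons h .nil, _, _ => (induce_adj.2 h).reachable
  | _, _, .cons (v := c) h (.cons (v := d) h' q), ha, hb => by
    by_cases hc : c ∈ B
    · have hd : d ∉ B := hindep c hc d h'
      exact (hdetour c hc _ _ ha hd h.symm h').trans
        (reachable_induce_compl_of_walk hindep hdetour q hd hb)
    · exact (induce_adj.2 h).reachable.trans
        (reachable_induce_compl_of_walk hindep hdetour (.cons h' q) hc hb)
termination_by _ _ w => w.length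

end SimpleGraph

section Torus

variable {N : ℕ}

def torusSteps (N : ℕ) : Set (ZMod N × ZMod N) := {(1, 0), (0, 1), (-1, 0), (0, -1)}

theorem nontrivial_of_torus_adj {x y : ZMod N × ZMod N} (h : (torus N).Adj x y) :
    Nontrivial (ZMod N) := by
  by_contra hN
  rw [not_nontrivial_iff_subsingleton] at hN
  exact h.ne (Subsingleton.elim x y)

theorem ne_zero_of_mem_torusSteps [Nontrivial (ZMod N)] {d : ZMod N × ZMod N}
    (hd : d ∈ torusSteps N) : d ≠ 0 := by
  rcases hd with rfl | rfl | rfl | rfl <;> simp [Prod.ext_iff]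

theorem torus_adj_add [Nontrivial (ZMod N)] (x : ZMod N × ZMod N) {d : ZMod N × ZMod N}
    (hd : d ∈ torusSteps N) : (torus N).Adj x (x + d) := by
  refine (SimpleGraph.fromRel_adj _ _ _).2 ⟨by simpa using ne_zero_of_mem_torusSteps hd, ?_⟩
  rcases hd with rfl | rfl | rfl | rfl <;> simp

theorem exists_mem_torusSteps_of_torus_adj {x y : ZMod N × ZMod N} (h : (torus N).Adj x y) :
    ∃ d ∈ torusSteps N, y = x + d := by
  obtain ⟨-, (⟨h₁, h₂⟩ | ⟨h₁, h₂⟩) | (⟨h₁, h₂⟩ | ⟨h₁, h₂⟩)⟩ := (SimpleGraph.fromRel_adj _ _ _).1 h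
  · exact ⟨(0, -1), by simp [torusSteps], Prod.ext (by simp [h₁]) (by simp [h₂])⟩
  · exact ⟨(-1, 0), by simp [torusSteps], Prod.ext (by simp [h₂]) (by simp [h₁])⟩
  · exact ⟨(0, 1), by simp [torusSteps], Prod.ext (by simp [h₁]) (by simp [h₂])⟩
  · exact ⟨(1, 0), by simp [torusSteps], Prod.ext (by simp [h₂]) (by simp [h₁])⟩

theorem torus_reachable_around_corner [Nontrivial (ZMod N)] {S : Set (ZMod N × ZMod N)}
    {c e f : ZMod N × ZMod N} (he : e ∈ torusSteps N) (hf : f ∈ torusSteps N)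
    (hcef : c + e + f ∈ S) {hce : c + e ∈ S} {hcf : c + f ∈ S} :
    ((torus N).induce S).Reachable ⟨c + e, hce⟩ ⟨c + f, hcf⟩ := by
  have hadj : (torus N).Adj (c + e + f) (c + f) := by
    simpa only [add_right_comm c f e] using (torus_adj_add (c + f) he).symm
  exact (SimpleGraph.induce_adj (v := ⟨_, hcef⟩).2 (torus_adj_add (c + e) hf)).reachable.trans
    (SimpleGraph.induce_adj (u := ⟨_, hcef⟩).2 hadj).reachable

theorem torus_reachable_of_adj_of_adj {S : Set (ZMod N × ZMod N)} {c x y : ZMod N × ZMod N}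
    (hS : ∀ v, v ≠ c → (torus N).dist c v ≤ 2 → v ∈ S)
    (hx : (torus N).Adj c x) (hy : (torus N).Adj c y) (hxS : x ∈ S) (hyS : y ∈ S) :
    ((torus N).induce S).Reachable ⟨x, hxS⟩ ⟨y, hyS⟩ := by
  have := nontrivial_of_torus_adj hx
  have mem_step : ∀ e ∈ torusSteps N, c + e ∈ S := fun e he =>
    hS _ (by simpa using ne_zero_of_mem_torusSteps he)
      ((SimpleGraph.dist_le (torus_adj_add c he).toWalk).trans (by simp))
  have corner : ∀ e (he : e ∈ torusSteps N) f (hf : f ∈ torusSteps N), e + f ≠ 0 →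
      ((torus N).induce S).Reachable ⟨c + e, mem_step e he⟩ ⟨c + f, mem_step f hf⟩ :=
    fun e he f hf hef => torus_reachable_around_corner he hf <| hS _
      (by simpa [add_assoc] using hef)
      ((SimpleGraph.dist_le ((torus_adj_add c he).toWalk.concat (torus_adj_add _ hf))).trans
        (by simp))
  have from_east : ∀ e (he : e ∈ torusSteps N), ((torus N).induce S).Reachable
      ⟨c + (1, 0), mem_step _ (by simp [torusSteps])⟩ ⟨c + e, mem_step e he⟩ := by
    have north := corner (1, 0) (by simp [torusSteps]) (0, 1) (by simp [torusSteps])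
      (by simp [Prod.ext_iff])
    have west := corner (0, 1) (by simp [torusSteps]) (-1, 0) (by simp [torusSteps])
      (by simp [Prod.ext_iff])
    have south := corner (1, 0) (by simp [torusSteps]) (0, -1) (by simp [torusSteps])
      (by simp [Prod.ext_iff])
    rintro e (rfl | rfl | rfl | rfl)
    exacts [.rfl, north, north.trans west, south]
  obtain ⟨e, he, rfl⟩ := exists_mem_torusSteps_of_torus_adj hx
  obtain ⟨f, hf, rfl⟩ := exists_mem_torusSteps_of_torus_adj hy
  exact (from_east e he).symm.trans (from_east f hf)

end Torus

theorem path_repair_around_byzantine_general (N : ℕ)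
    (B : Set (ZMod N × ZMod N))
    (hB : ∀ b ∈ B, ∀ b' ∈ B, b ≠ b' → 5 ≤ (torus N).dist b b')
    (a b : ZMod N × ZMod N) (w : (torus N).Walk a b)
    (ha : a ∉ B) (hb : b ∉ B) :
    ∃ w' : (torus N).Walk a b, ∀ x ∈ w'.support, x ∉ B := by
  have near_correct : ∀ c ∈ B, ∀ v, v ≠ c → (torus N).dist c v ≤ 2 → v ∉ B :=
    fun c hc v hvc hcv hv => by have := hB c hc v hv hvc.symm; omega
  have hindep : ∀ c ∈ B, ∀ d, (torus N).Adj c d → d ∉ B := fun c hc d hcd =>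
    near_correct c hc d hcd.ne.symm (by rw [SimpleGraph.dist_eq_one_iff_adj.2 hcd]; omega)
  exact (SimpleGraph.reachable_induce_compl_of_walk hindep
    (fun c hc _ _ hx hy hcx hcy => torus_reachable_of_adj_of_adj (near_correct c hc) hcx hcy hx hy)
    w ha hb).exists_walk_of_induce

/-- **Path repair around spaced Byzantine vertices.** In an `N × N` torus
(`N ≥ 7`) with a set `B` of Byzantine vertices pairwise at graph distance at
least 5, any path (walk) between two correct vertices `a` and `b` can be
repaired into a path from `a` to `b` consisting only of correct vertices
(each Byzantine vertex on the path can be bypassed along the entirely correct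
8-cycle of vertices surrounding it). -/
theorem path_repair_around_byzantine (N : ℕ) (hN : 7 ≤ N)
    (B : Set (ZMod N × ZMod N))
    (hB : ∀ b ∈ B, ∀ b' ∈ B, b ≠ b' → 5 ≤ (torus N).dist b b')
    (a b : ZMod N × ZMod N) (w : (torus N).Walk a b)
    (ha : a ∉ B) (hb : b ∉ B) :
    ∃ w' : (torus N).Walk a b, ∀ x ∈ w'.support, x ∉ B :=
  path_repair_around_byzantine_general N B hB a b w ha hb
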